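/- arXiv:2205.03526 — 6 statements merged into one kernel-verified Lean document; each statement's English description precedes it below -/
import Mathlib

section
/- Let G be a connected bipartite graph. If S is a general position set of G with |S| ≥ 3, then S is an independent set. -/
/-!
If `u v` is an edge and `w` is any other vertex of a connected bipartite graph, then
`d(w,u)` and `d(w,v)` differ by at most one and have different parities, so they differ by
exactly one. Hence one endpoint of the edge lies on a geodesic from `w` to the other, and a
general position set containing both endpoints has no third vertex.
-/

open SimpleGraph

/-- The interval `I[u,v]`: vertices lying on some `u,v`-geodesic. -/
def gpInterval {V : Type*} (G : SimpleGraph V) (u v : V) : Set V :=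
  {x | G.dist u x + G.dist x v = G.dist u v}

/-- `S` is a general position set: no three distinct vertices of `S` lie on a common geodesic. -/
def IsGPSet {V : Type*} (G : SimpleGraph V) (S : Set V) : Prop :=
  ∀ u ∈ S, ∀ v ∈ S, ∀ w ∈ S, u ≠ v → u ≠ w → v ≠ w → w ∉ gpInterval G u v

namespace SimpleGraph

variable {V : Type*} {G : SimpleGraph V} {u v w : V}

/-- Were the distances equal, two geodesics from `u` to the ends of the edge would close up to
a loop of odd length. -/
theorem Colorable.dist_ne_of_adj (hbip : G.Colorable 2) (hreach : G.Reachable u v)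
    (hadj : G.Adj v w) : G.dist u v ≠ G.dist u w := by
  intro hdist
  obtain ⟨p, hp⟩ := hreach.exists_walk_length_eq_dist
  obtain ⟨q, hq⟩ := (hreach.trans hadj.reachable).exists_walk_length_eq_dist
  have hodd : Odd ((p.concat hadj).append q.reverse).length := by
    rw [Walk.length_append, Walk.length_concat, Walk.length_reverse, hp, hq, ← hdist]
    exact ⟨G.dist u v, by ring⟩
  exact Nat.not_even_iff_odd.mpr hodd (two_colorable_iff_forall_loop_even.mp hbip u _)

theorem Colorable.dist_eq_succ_or_dist_eq_succ_of_adj (hbip : G.Colorable 2)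
    (hreach : G.Reachable u v) (hadj : G.Adj v w) :
    G.dist u w = G.dist u v + 1 ∨ G.dist u v = G.dist u w + 1 := by
  have hne := hbip.dist_ne_of_adj hreach hadj
  rcases hadj.diff_dist_adj (u := u) with h | h | h <;> omega

theorem mem_gpInterval_of_adj_of_dist_eq_succ (hadj : G.Adj v w)
    (hdist : G.dist u w = G.dist u v + 1) : v ∈ gpInterval G u w := by
  simp only [gpInterval, Set.mem_ofPred_eq, dist_eq_one_iff_adj.mpr hadj, hdist]

theorem IsGPSet.not_adj_of_mem (hG : G.Connected) (hbip : G.Colorable 2) {S : Set V}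
    (hS : IsGPSet G S) (hu : u ∈ S) (hv : v ∈ S) (hw : w ∈ S) (hwu : w ≠ u) (hwv : w ≠ v) :
    ¬ G.Adj u v := by
  intro hadj
  rcases hbip.dist_eq_succ_or_dist_eq_succ_of_adj (hG w u) hadj with h | h
  · exact hS w hw v hv u hu hwv hwu (G.ne_of_adj hadj).symm
      (mem_gpInterval_of_adj_of_dist_eq_succ hadj h)
  · exact hS w hw u hu v hv hwu hwv (G.ne_of_adj hadj)
      (mem_gpInterval_of_adj_of_dist_eq_succ hadj.symm h)

end SimpleGraph

theorem stmt_2_general {V : Type*} (G : SimpleGraph V) (hG : G.Connected)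
    (hbip : G.Colorable 2) (S : Set V) (hS : IsGPSet G S) (hcard : 3 ≤ S.ncard) :
    ∀ u ∈ S, ∀ v ∈ S, ¬ G.Adj u v := by
  intro u hu v hv
  by_cases huv : u = v
  · simp [huv]
  obtain ⟨w, hw, hwuv⟩ := Set.exists_mem_notMem_of_ncard_lt_ncard
    (s := {u, v}) (t := S) (by rw [Set.ncard_pair huv]; omega)
  simp only [Set.mem_insert_iff, Set.mem_singleton_iff, not_or] at hwuv
  exact hS.not_adj_of_mem hG hbip hu hv hw hwuv.1 hwuv.2

theorem stmt_2 {V : Type*} [Fintype V] (G : SimpleGraph V) (hG : G.Connected)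
    (hbip : G.Colorable 2) (S : Set V) (hS : IsGPSet G S) (hcard : 3 ≤ S.ncard) :
    ∀ u ∈ S, ∀ v ∈ S, ¬ G.Adj u v :=
  stmt_2_general G hG hbip S hS hcard
end

section
/- Let G and H be connected graphs and let R be a general position set of G □ H. If u = (g,h) ∈ R, then either the H-layer through g meets R only in u, or the G-layer through h meets R only in u; that is, ({g} × V(H)) ∩ R = {u} or (V(G) × {h}) ∩ R = {u}. -/
open SimpleGraph

lemma boxProd_dist_le_walk {V W : Type*} {G : SimpleGraph V} {H : SimpleGraph W}
    (hG : G.Connected) (hH : H.Connected) :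
    ∀ {p q : V × W} (w : (G □ H).Walk p q),
      G.dist p.1 q.1 + H.dist p.2 q.2 ≤ w.length := by
  intro p q w
  induction w with
  | nil => simp
  | @cons u v r hadj p ih =>
    obtain ⟨a, b⟩ := u
    obtain ⟨x, y⟩ := v
    obtain ⟨c, d⟩ := r
    rw [boxProd_adj] at hadj
    dsimp only at hadj ih ⊢
    rcases hadj with ⟨hxy, rfl⟩ | ⟨hxy, rfl⟩
    · have h1 : G.dist a c ≤ 1 + G.dist x c := by
        calc G.dist a c ≤ G.dist a x + G.dist x c := hG.dist_triangle
          _ ≤ 1 + G.dist x c := by gcongr; exact (SimpleGraph.dist_eq_one_iff_adj.2 hxy).le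
      simp only [SimpleGraph.Walk.length_cons]
      omega
    · have h1 : H.dist b d ≤ 1 + H.dist y d := by
        calc H.dist b d ≤ H.dist b y + H.dist y d := hH.dist_triangle
          _ ≤ 1 + H.dist y d := by gcongr; exact (SimpleGraph.dist_eq_one_iff_adj.2 hxy).le
      simp only [SimpleGraph.Walk.length_cons]
      omega

lemma boxProd_dist {V W : Type*} {G : SimpleGraph V} {H : SimpleGraph W}
    (hG : G.Connected) (hH : H.Connected) (a c : V) (b d : W) :
    (G □ H).dist (a, b) (c, d) = G.dist a c + H.dist b d := by
  apply le_antisymm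
  · obtain ⟨p, hp⟩ := hG.exists_walk_length_eq_dist a c
    obtain ⟨q, hq⟩ := hH.exists_walk_length_eq_dist b d
    have : ((p.boxProdLeft H b).append (q.boxProdRight G c)).length
        = G.dist a c + H.dist b d := by
      rw [SimpleGraph.Walk.length_append]
      simp [SimpleGraph.Walk.boxProdLeft, SimpleGraph.Walk.boxProdRight, hp, hq]
      erw [SimpleGraph.Walk.length_map, SimpleGraph.Walk.length_map, hp, hq]
    calc (G □ H).dist (a, b) (c, d)
        ≤ ((p.boxProdLeft H b).append (q.boxProdRight G c)).length := SimpleGraph.dist_le _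
      _ = _ := this
  · obtain ⟨w, hw⟩ := ((hG.boxProd hH).exists_walk_length_eq_dist (a, b) (c, d))
    rw [← hw]
    exact boxProd_dist_le_walk hG hH w

theorem stmt_4 {V W : Type*} [Fintype V] [Fintype W] (G : SimpleGraph V) (H : SimpleGraph W)
    (hG : G.Connected) (hH : H.Connected) (R : Set (V × W)) (hR : IsGPSet (G □ H) R)
    (g : V) (h : W) (hu : (g, h) ∈ R) :
    ({g} ×ˢ (Set.univ : Set W)) ∩ R = {(g, h)} ∨
    ((Set.univ : Set V) ×ˢ {h}) ∩ R = {(g, h)} := by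
  by_contra hcon
  push_neg at hcon
  obtain ⟨h1, h2⟩ := hcon
  -- extract a point (g, h') ∈ R with h' ≠ h
  have e1 : ∃ h' : W, (g, h') ∈ R ∧ h' ≠ h := by
    by_contra he
    push_neg at he
    apply h1
    ext ⟨x, y⟩
    simp only [Set.mem_inter_iff, Set.mem_prod, Set.mem_singleton_iff, Set.mem_univ, and_true,
      Prod.ext_iff]
    constructor
    · rintro ⟨rfl, hy⟩
      rcases eq_or_ne y h with rfl | hne
      · exact ⟨rfl, rfl⟩
      · exact absurd (he y hy) hne
    · rintro ⟨rfl, rfl⟩; exact ⟨rfl, hu⟩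
  have e2 : ∃ g' : V, (g', h) ∈ R ∧ g' ≠ g := by
    by_contra he
    push_neg at he
    apply h2
    ext ⟨x, y⟩
    simp only [Set.mem_inter_iff, Set.mem_prod, Set.mem_singleton_iff, Set.mem_univ, true_and,
      Prod.ext_iff]
    constructor
    · rintro ⟨rfl, hy⟩
      rcases eq_or_ne x g with rfl | hne
      · exact ⟨rfl, rfl⟩
      · exact absurd (he x hy) hne
    · rintro ⟨rfl, rfl⟩; exact ⟨rfl, hu⟩
  obtain ⟨h', hh'R, hh'⟩ := e1
  obtain ⟨g', hg'R, hg'⟩ := e2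
  refine hR (g, h') hh'R (g', h) hg'R (g, h) hu ?_ ?_ ?_ ?_
  · simp [Prod.ext_iff, hh']
  · simp [Prod.ext_iff, hh']
  · simp [Prod.ext_iff, hg']
  · show _ + _ = _
    rw [boxProd_dist hG hH, boxProd_dist hG hH, boxProd_dist hG hH]
    simp only [SimpleGraph.dist_self]
    omega
end

section
/- Let G and H be connected graphs. If S is a general position set of the lexicographic product G ∘ H, then the projection π_G(S) is a general position set of G. -/
open SimpleGraph

/-- The lexicographic product `G ∘ H`. -/
def lexProd {V W : Type*} (G : SimpleGraph V) (H : SimpleGraph W) : SimpleGraph (V × W) where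
  Adj x y := G.Adj x.1 y.1 ∨ (x.1 = y.1 ∧ H.Adj x.2 y.2)
  symm := ⟨by
    rintro ⟨a, b⟩ ⟨c, d⟩ (h | ⟨rfl, h⟩)
    · exact Or.inl h.symm
    · exact Or.inr ⟨rfl, h.symm⟩⟩
  loopless := ⟨by
    rintro ⟨a, b⟩ (h | ⟨-, h⟩)
    · exact G.irrefl h
    · exact H.irrefl h⟩

/-- The graph hom `g ↦ (g, h)` into the lexicographic product. -/
def lexSection {V W : Type*} (G : SimpleGraph V) (H : SimpleGraph W) (h : W) :
    G →g lexProd G H where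
  toFun g := (g, h)
  map_rel' := fun hadj => Or.inl hadj

/-- Project a walk in the lexicographic product to a walk in `G` of at most the same length. -/
lemma lex_walk_project {V W : Type*} {G : SimpleGraph V} {H : SimpleGraph W}
    {x y : V × W} (p : (lexProd G H).Walk x y) :
    ∃ q : G.Walk x.1 y.1, q.length ≤ p.length := by
  induction p with
  | nil => exact ⟨Walk.nil, le_refl 0⟩
  | @cons a b c e p ih =>
    obtain ⟨q, hq⟩ := ih
    rcases e with e | ⟨heq, -⟩
    · exact ⟨Walk.cons e q, Nat.succ_le_succ hq⟩
    · exact ⟨q.copy heq.symm rfl, by rw [Walk.length_copy]; exact le_trans hq (Nat.le_succ _)⟩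

lemma lex_dist_eq {V W : Type*} {G : SimpleGraph V} (H : SimpleGraph W)
    (hG : G.Connected) {g g' : V} (hgg : g ≠ g') (h h' : W) :
    (lexProd G H).dist (g, h) (g', h') = G.dist g g' := by
  obtain ⟨p, hp⟩ := hG.exists_walk_length_eq_dist g g'
  -- construct a lex walk of length `p.length`
  have hle : (lexProd G H).dist (g, h) (g', h') ≤ G.dist g g' := by
    cases p with
    | nil => exact absurd rfl hgg
    | @cons _ b _ e q =>
      have hd := SimpleGraph.dist_le (Walk.cons
        (Or.inl e : (lexProd G H).Adj (g, h) (b, h')) (q.map (lexSection G H h')))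
      rw [← hp]
      exact le_of_le_of_eq hd (congrArg (· + 1) (Walk.length_map _ _))
  have hge : G.dist g g' ≤ (lexProd G H).dist (g, h) (g', h') := by
    have hr : (lexProd G H).Reachable (g, h) (g', h') := by
      cases p with
      | nil => exact absurd rfl hgg
      | @cons _ b _ e q =>
        exact ⟨Walk.cons (Or.inl e) (q.map (lexSection G H h'))⟩
    obtain ⟨w, hw⟩ := hr.exists_walk_length_eq_dist
    obtain ⟨q, hq⟩ := lex_walk_project w
    calc G.dist g g' ≤ q.length := SimpleGraph.dist_le q
      _ ≤ w.length := hq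
      _ = _ := hw
  exact le_antisymm hle hge

theorem stmt_9 {V W : Type*} [Fintype V] [Fintype W] (G : SimpleGraph V) (H : SimpleGraph W)
    (hG : G.Connected) (hH : H.Connected) (S : Set (V × W))
    (hS : IsGPSet (lexProd G H) S) :
    IsGPSet G (Prod.fst '' S) := by
  rintro u ⟨⟨u, hu⟩, hau, rfl⟩ v ⟨⟨v, hv⟩, hbv, rfl⟩ w ⟨⟨w, hw⟩, hcw, rfl⟩ huv huw hvw hint
  simp only at *
  have hne1 : (u, hu) ≠ (v, hv) := fun h => huv (congrArg Prod.fst h)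
  have hne2 : (u, hu) ≠ (w, hw) := fun h => huw (congrArg Prod.fst h)
  have hne3 : (v, hv) ≠ (w, hw) := fun h => hvw (congrArg Prod.fst h)
  apply hS _ hau _ hbv _ hcw hne1 hne2 hne3
  have h1 := lex_dist_eq H hG huw hu hw
  have h2 : (lexProd G H).dist (w, hw) (v, hv) = G.dist w v := lex_dist_eq H hG (Ne.symm hvw) hw hv
  have h3 := lex_dist_eq H hG huv hu hv
  unfold gpInterval at *
  simp only [Set.mem_setOf_eq] at *
  rw [h1, h2, h3]
  exact hint
end

section
/- Let G be the graph obtained from a graph H by adding a universal vertex u and pendant vertices f_v for each v ∈ V(H) as above, and let S be a general position set of G containing u. Then the set C = {v ∈ V(H) : v ∈ S or f_v ∈ S} is a clique of H, and for each v ∈ V(H), S contains at most one of the vertices v, f_v. -/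
open SimpleGraph

/-- The graph obtained from `H` by adding a universal vertex `Sum.inr (Sum.inl ())` and,
for each `v`, a pendant vertex `Sum.inr (Sum.inr v)` adjacent only to `Sum.inl v`. -/
def aug {W : Type*} (H : SimpleGraph W) : SimpleGraph (W ⊕ (Unit ⊕ W)) where
  Adj x y :=
    match x, y with
    | Sum.inl a, Sum.inl b => H.Adj a b
    | Sum.inl _, Sum.inr (Sum.inl _) => True
    | Sum.inr (Sum.inl _), Sum.inl _ => True
    | Sum.inl a, Sum.inr (Sum.inr b) => a = b
    | Sum.inr (Sum.inr a), Sum.inl b => a = b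
    | _, _ => False
  symm := ⟨by
    rintro (a | u | a) (b | u2 | b) h <;>
      first | exact h.symm | exact h | trivial⟩
  loopless := ⟨by
    rintro (a | u | a) h
    · exact H.irrefl h
    · exact h
    · exact h⟩

section Aux

variable {W : Type*} (H : SimpleGraph W)

local notation "uu" => (Sum.inr (Sum.inl ()) : W ⊕ (Unit ⊕ W))
local notation "vl" v => (Sum.inl v : W ⊕ (Unit ⊕ W))
local notation "fp" v => (Sum.inr (Sum.inr v) : W ⊕ (Unit ⊕ W))

lemma aug_adj_u (v : W) : (aug H).Adj (vl v) uu := trivial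

lemma aug_adj_fp (v : W) : (aug H).Adj (vl v) (fp v) := rfl

lemma aug_reach_u (a : W ⊕ (Unit ⊕ W)) : (aug H).Reachable uu a := by
  rcases a with v | u | v
  · exact ((aug_adj_u H v).symm).reachable
  · rcases u; rfl
  · exact ((aug_adj_u H v).symm).reachable.trans (aug_adj_fp H v).reachable

lemma aug_reach (a b : W ⊕ (Unit ⊕ W)) : (aug H).Reachable a b :=
  (aug_reach_u H a).symm.trans (aug_reach_u H b)

/-- Any walk ending at a pendant vertex has length at least `dist a (inl w) + 1`. -/
lemma aug_walk_pendant' {w : W} {a t : W ⊕ (Unit ⊕ W)} (p : (aug H).Walk a t) :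
    t = (fp w) → a ≠ t → (aug H).dist a (vl w) + 1 ≤ p.length := by
  induction p with
  | nil => intro _ ha; exact absurd rfl ha
  | @cons x y z hxy q ih =>
    rintro rfl ha
    by_cases hy : y = (fp w)
    · subst hy
      have hx : x = (vl w) := by
        rcases x with v | u | v
        · exact congrArg Sum.inl hxy
        · exact hxy.elim
        · exact hxy.elim
      subst hx
      simp [SimpleGraph.dist_self]
    · have h1 := ih rfl hy
      have h2 : (aug H).dist x (vl w) ≤ 1 + (aug H).dist y (vl w) := by
        calc (aug H).dist x (vl w) ≤ (aug H).dist x y + (aug H).dist y (vl w) :=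
              Connected.dist_triangle ⟨aug_reach H⟩
          _ ≤ 1 + (aug H).dist y (vl w) := by
              have : (aug H).dist x y = 1 := (dist_eq_one_iff_adj).mpr hxy
              omega
      simp only [SimpleGraph.Walk.length_cons]
      omega

lemma aug_walk_pendant {w : W} {a : W ⊕ (Unit ⊕ W)} (p : (aug H).Walk a (fp w))
    (ha : a ≠ (fp w)) : (aug H).dist a (vl w) + 1 ≤ p.length :=
  aug_walk_pendant' H p rfl ha

lemma aug_dist_pendant {w : W} {a : W ⊕ (Unit ⊕ W)} (ha : a ≠ (fp w)) :
    (aug H).dist a (fp w) = (aug H).dist a (vl w) + 1 := by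
  have hle : (aug H).dist a (fp w) ≤ (aug H).dist a (vl w) + 1 := by
    calc (aug H).dist a (fp w) ≤ (aug H).dist a (vl w) + (aug H).dist (vl w) (fp w) :=
          Connected.dist_triangle ⟨aug_reach H⟩
      _ = (aug H).dist a (vl w) + 1 := by
          rw [(dist_eq_one_iff_adj).mpr (aug_adj_fp H w)]
  obtain ⟨p, hp⟩ := (aug_reach H a (fp w)).exists_walk_length_eq_dist
  have := aug_walk_pendant H p ha
  omega

lemma aug_dist_u (v : W) : (aug H).dist uu (vl v) = 1 :=
  (dist_eq_one_iff_adj).mpr (aug_adj_u H v).symm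

lemma aug_dist_vw {v w : W} (hvw : v ≠ w) (hadj : ¬ H.Adj v w) :
    (aug H).dist (vl v) (vl w) = 2 := by
  have hle : (aug H).dist (vl v) (vl w) ≤ 2 := by
    have := SimpleGraph.dist_le
      (((aug_adj_u H v).toWalk).append ((aug_adj_u H w).symm.toWalk))
    simpa using this
  have h0 : (aug H).dist (vl v) (vl w) ≠ 0 := by
    rw [SimpleGraph.dist_ne_zero_iff_ne_and_reachable]
    exact ⟨by simpa using hvw, aug_reach H _ _⟩
  have h1 : (aug H).dist (vl v) (vl w) ≠ 1 := fun h => hadj ((SimpleGraph.dist_eq_one_iff_adj (G := aug H)).mp h)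
  omega

end Aux

theorem stmt_15 {W : Type*} [Fintype W] (H : SimpleGraph W) (S : Set (W ⊕ (Unit ⊕ W)))
    (hS : IsGPSet (aug H) S) (hu : (Sum.inr (Sum.inl ()) : W ⊕ (Unit ⊕ W)) ∈ S) :
    H.IsClique {v : W | Sum.inl v ∈ S ∨ Sum.inr (Sum.inr v) ∈ S} ∧
    ∀ v : W, ¬(Sum.inl v ∈ S ∧ Sum.inr (Sum.inr v) ∈ S) := by
  set u : W ⊕ (Unit ⊕ W) := Sum.inr (Sum.inl ()) with hu_def
  constructor
  · intro v hv w hw hvw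
    by_contra hadj
    -- distances to the universal vertex
    have dvw := aug_dist_vw H hvw hadj
    have duv := aug_dist_u H v
    have duw := aug_dist_u H w
    have dufv : (aug H).dist u (Sum.inr (Sum.inr v)) = 2 := by
      rw [aug_dist_pendant H (by simp [hu_def]), duv]
    have dufw : (aug H).dist u (Sum.inr (Sum.inr w)) = 2 := by
      rw [aug_dist_pendant H (by simp [hu_def]), duw]
    have dvfw : (aug H).dist (Sum.inl v) (Sum.inr (Sum.inr w)) = 3 := by
      rw [aug_dist_pendant H (by simp), dvw]
    have dwfv : (aug H).dist (Sum.inl w) (Sum.inr (Sum.inr v)) = 3 := by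
      rw [aug_dist_pendant H (by simp), SimpleGraph.dist_comm]
      exact congrArg (· + 1) dvw
    have dfvfw : (aug H).dist (Sum.inr (Sum.inr v)) (Sum.inr (Sum.inr w)) = 4 := by
      rw [aug_dist_pendant H (by simp [hvw]), SimpleGraph.dist_comm]
      exact congrArg (· + 1) dwfv
    -- pick x ∈ {v, f_v} ∩ S, y ∈ {w, f_w} ∩ S and contradict general position with u
    have dvu : (aug H).dist (Sum.inl v) u = 1 := SimpleGraph.dist_comm.trans duv
    have dfvu : (aug H).dist (Sum.inr (Sum.inr v)) u = 2 := SimpleGraph.dist_comm.trans dufv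
    have dfvw : (aug H).dist (Sum.inr (Sum.inr v)) (Sum.inl w) = 3 :=
      SimpleGraph.dist_comm.trans dwfv
    rcases hv with hv | hv <;> rcases hw with hw | hw
    · exact hS _ hv _ hw u hu (by simp [hvw]) (by simp [hu_def]) (by simp [hu_def])
        (by simp only [gpInterval, Set.mem_setOf_eq]; rw [dvu, duw, dvw])
    · exact hS _ hv _ hw u hu (by simp) (by simp [hu_def]) (by simp [hu_def])
        (by simp only [gpInterval, Set.mem_setOf_eq]; rw [dvu, dufw, dvfw])
    · exact hS _ hv _ hw u hu (by simp) (by simp [hu_def]) (by simp [hu_def])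
        (by simp only [gpInterval, Set.mem_setOf_eq]; rw [dfvu, duw, dfvw])
    · exact hS _ hv _ hw u hu (by simp [hvw]) (by simp [hu_def]) (by simp [hu_def])
        (by simp only [gpInterval, Set.mem_setOf_eq]; rw [dfvu, dufw, dfvfw])
  · rintro v ⟨hv, hfv⟩
    have duv := aug_dist_u H v
    have dufv : (aug H).dist u (Sum.inr (Sum.inr v)) = 2 := by
      rw [aug_dist_pendant H (by simp [hu_def]), duv]
    have dvfv : (aug H).dist (Sum.inl v) (Sum.inr (Sum.inr v)) = 1 :=
      (dist_eq_one_iff_adj).mpr (aug_adj_fp H v)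
    exact hS u hu _ hfv _ hv (by simp [hu_def]) (by simp [hu_def]) (by simp)
      (by simp only [gpInterval, Set.mem_setOf_eq]; rw [duv, dvfv, dufv])
end

section
/- In the rook's graph K_n □ K_m (n, m ≥ 2), a set S of vertices is a general position set if and only if for every pair of distinct vertices (a,b), (c,d) ∈ S with a ≠ c and b ≠ d, there is no third vertex of S in the combinatorial rectangle {a,c} × {b,d}; equivalently, S contains no three vertices (a,b), (a,d), (c,d) with a ≠ c and b ≠ d. -/
open SimpleGraph

section aux

variable {n m : ℕ}

private abbrev RG (n m : ℕ) : SimpleGraph (Fin n × Fin m) :=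
  (⊤ : SimpleGraph (Fin n)) □ (⊤ : SimpleGraph (Fin m))

private lemma rg_adj (u v : Fin n × Fin m) :
    (RG n m).Adj u v ↔ (u.1 = v.1 ∧ u.2 ≠ v.2) ∨ (u.2 = v.2 ∧ u.1 ≠ v.1) := by
  simp only [boxProd_adj, top_adj]; tauto

private lemma rg_conn (hn : 2 ≤ n) (hm : 2 ≤ m) : (RG n m).Connected := by
  have : Nonempty (Fin n) := ⟨⟨0, by omega⟩⟩
  have : Nonempty (Fin m) := ⟨⟨0, by omega⟩⟩
  exact Connected.boxProd connected_top connected_top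

private lemma rg_dist_two {a c : Fin n} {b d : Fin m} (ha : a ≠ c) (hb : b ≠ d) :
    (RG n m).dist (a, b) (c, d) = 2 := by
  have hadj1 : (RG n m).Adj (a, b) (a, d) := (rg_adj _ _).mpr (Or.inl ⟨rfl, hb⟩)
  have hadj2 : (RG n m).Adj (a, d) (c, d) := (rg_adj _ _).mpr (Or.inr ⟨rfl, ha⟩)
  have hle : (RG n m).dist (a, b) (c, d) ≤ 2 := by
    have := SimpleGraph.dist_le (hadj1.toWalk.append hadj2.toWalk)
    simpa using this
  have hne : (a, b) ≠ (c, d) := fun h => ha (congrArg Prod.fst h)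
  have h0 : (RG n m).dist (a, b) (c, d) ≠ 0 := by
    intro h
    exact hne (((hadj1.reachable.trans hadj2.reachable).dist_eq_zero_iff).mp h)
  have h1 : (RG n m).dist (a, b) (c, d) ≠ 1 := by
    intro h
    rcases (rg_adj _ _).mp (SimpleGraph.dist_eq_one_iff_adj.mp h) with ⟨h, _⟩ | ⟨h, _⟩
    · exact ha h
    · exact hb h
  omega

end aux

theorem stmt_16 (n m : ℕ) (hn : 2 ≤ n) (hm : 2 ≤ m) (S : Set (Fin n × Fin m)) :
    IsGPSet ((⊤ : SimpleGraph (Fin n)) □ (⊤ : SimpleGraph (Fin m))) S ↔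
      ∀ (a c : Fin n) (b d : Fin m), a ≠ c → b ≠ d →
        ¬((a, b) ∈ S ∧ (a, d) ∈ S ∧ (c, d) ∈ S) := by
  have hconn := rg_conn hn hm
  constructor
  · rintro hGP a c b d ha hb ⟨h1, h2, h3⟩
    have hne12 : (a, b) ≠ (a, d) := fun h => hb (congrArg Prod.snd h)
    have hne13 : (a, b) ≠ (c, d) := fun h => ha (congrArg Prod.fst h)
    have hne23 : (a, d) ≠ (c, d) := fun h => ha (congrArg Prod.fst h)
    refine hGP _ h1 _ h3 _ h2 hne13 hne12 hne23.symm ?_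
    show (RG n m).dist (a, b) (a, d) + (RG n m).dist (a, d) (c, d)
      = (RG n m).dist (a, b) (c, d)
    have e1 : (RG n m).dist (a, b) (a, d) = 1 :=
      SimpleGraph.dist_eq_one_iff_adj.mpr ((rg_adj (a, b) (a, d)).mpr (Or.inl ⟨rfl, hb⟩))
    have e2 : (RG n m).dist (a, d) (c, d) = 1 :=
      SimpleGraph.dist_eq_one_iff_adj.mpr ((rg_adj (a, d) (c, d)).mpr (Or.inr ⟨rfl, ha⟩))
    rw [e1, e2, rg_dist_two ha hb]
  · rintro H ⟨a, b⟩ hu ⟨c, d⟩ hv ⟨x, y⟩ hw huv huw hvw hI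
    have hI' : (RG n m).dist (a, b) (x, y) + (RG n m).dist (x, y) (c, d)
        = (RG n m).dist (a, b) (c, d) := hI
    have hd1 : 0 < (RG n m).dist (a, b) (x, y) := hconn.pos_dist_of_ne huw
    have hd2 : 0 < (RG n m).dist (x, y) (c, d) := hconn.pos_dist_of_ne (Ne.symm hvw)
    by_cases hac : a = c
    · -- then b ≠ d, dist u v = 1, contradiction
      subst hac
      have hbd : b ≠ d := fun h => huv (by rw [h])
      have e : (RG n m).dist (a, b) (a, d) = 1 :=
        SimpleGraph.dist_eq_one_iff_adj.mpr ((rg_adj (a, b) (a, d)).mpr (Or.inl ⟨rfl, hbd⟩))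
      rw [e] at hI'
      omega
    · by_cases hbd : b = d
      · subst hbd
        have e : (RG n m).dist (a, b) (c, b) = 1 :=
          SimpleGraph.dist_eq_one_iff_adj.mpr ((rg_adj (a, b) (c, b)).mpr (Or.inr ⟨rfl, hac⟩))
        rw [e] at hI'
        omega
      · rw [rg_dist_two hac hbd] at hI'
        have e1 : (RG n m).dist (a, b) (x, y) = 1 := by omega
        have e2 : (RG n m).dist (x, y) (c, d) = 1 := by omega
        have a1 := (rg_adj _ _).mp (SimpleGraph.dist_eq_one_iff_adj.mp e1)
        have a2 := (rg_adj _ _).mp (SimpleGraph.dist_eq_one_iff_adj.mp e2)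
        simp only at a1 a2
        rcases a1 with ⟨hx, hy⟩ | ⟨hy, hx⟩
        · -- x = a, y ≠ b; from a2: since x = a ≠ c, need y = d
          rcases a2 with ⟨h, _⟩ | ⟨h, _⟩
          · exact hac (hx.trans h)
          · rw [← hx, h] at hw
            exact H a c b d hac hbd ⟨hu, hw, hv⟩
        · -- y = b, x ≠ a; from a2: since y = b ≠ d, need x = c
          rcases a2 with ⟨h, _⟩ | ⟨h, _⟩
          · rw [← hy, h] at hw
            exact H c a d b (Ne.symm hac) (Ne.symm hbd) ⟨hv, hw, hu⟩
          · exact hbd (hy.trans h)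
end

section
/- In the complete multipartite graph K_{n_1,…,n_k} with k ≥ 2 parts each of size ≥ 2, a set S of vertices is a maximal general position set if and only if S is one of the partition classes, or S consists of exactly one vertex from each of the k partition classes. -/
open SimpleGraph

/-- The complete multipartite graph with partition classes given by the fibers of `p`. -/
def multipartite {V : Type*} {k : ℕ} (p : V → Fin k) : SimpleGraph V where
  Adj u v := p u ≠ p v
  symm := ⟨fun _ _ h e => h e.symm⟩
  loopless := ⟨fun _ h => h rfl⟩

section aux

variable {V : Type*} {k : ℕ} {p : V → Fin k}

lemma multipartite_adj {u v : V} : (multipartite p).Adj u v ↔ p u ≠ p v := Iff.rfl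

lemma mp_exists_other (hk : 2 ≤ k) (hsize : ∀ i : Fin k, 2 ≤ Set.ncard {v | p v = i})
    (i : Fin k) : ∃ w : V, p w ≠ i := by
  have : Nontrivial (Fin k) := Fin.nontrivial_iff_two_le.mpr hk
  obtain ⟨j, hj⟩ := exists_ne i
  have h2 := hsize j
  have : ({v | p v = j} : Set V).Nonempty :=
    Set.nonempty_of_ncard_ne_zero (by omega)
  obtain ⟨w, hw⟩ := this
  exact ⟨w, by rw [hw]; exact hj⟩

lemma mp_reachable (hk : 2 ≤ k) (hsize : ∀ i : Fin k, 2 ≤ Set.ncard {v | p v = i})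
    (u v : V) : (multipartite p).Reachable u v := by
  by_cases h : p u = p v
  · by_cases huv : u = v
    · subst huv; rfl
    · obtain ⟨w, hw⟩ := mp_exists_other hk hsize (p u)
      exact (Adj.reachable (by exact hw ∘ Eq.symm)).trans
        (Adj.reachable (show p w ≠ p v from h ▸ hw))
  · exact Adj.reachable h

lemma mp_dist_eq_two (hne : (u : V) ≠ v) (h : p u = p v) (w : V) (hw : p w ≠ p u) :
    (multipartite p).dist u v = 2 := by
  have hle : (multipartite p).dist u v ≤ 2 := by
    have hd := SimpleGraph.dist_le
      (Walk.cons (show (multipartite p).Adj u w from Ne.symm hw)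
        (Walk.cons (show (multipartite p).Adj w v from fun e => hw (e.trans h.symm)) Walk.nil))
    simpa using hd
  have hpos : 0 < (multipartite p).dist u v :=
    Reachable.pos_dist_of_ne ((Adj.reachable (Ne.symm hw : (multipartite p).Adj u w)).trans
      (Adj.reachable (show p w ≠ p v from h ▸ hw))) hne
  have hne1 : (multipartite p).dist u v ≠ 1 := fun h1 =>
    (SimpleGraph.dist_eq_one_iff_adj.mp h1) h
  omega

lemma mp_mem_interval (hne : (u : V) ≠ v) (h : p u = p v) (w : V) (hw : p w ≠ p u) :
    w ∈ gpInterval (multipartite p) u v := by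
  have h1 : (multipartite p).dist u w = 1 :=
    SimpleGraph.dist_eq_one_iff_adj.mpr (Ne.symm hw : (multipartite p).Adj u w)
  have h2 : (multipartite p).dist w v = 1 :=
    SimpleGraph.dist_eq_one_iff_adj.mpr (show p w ≠ p v from h ▸ hw)
  have h3 := mp_dist_eq_two hne h w hw
  simp only [gpInterval, Set.mem_setOf_eq, h1, h2, h3]

lemma mp_not_mem_interval_adj (hk : 2 ≤ k)
    (hsize : ∀ i : Fin k, 2 ≤ Set.ncard {v | p v = i})
    {u v w : V} (h : p u ≠ p v) (hwu : w ≠ u) (hwv : w ≠ v) :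
    w ∉ gpInterval (multipartite p) u v := by
  have h1 : (multipartite p).dist u v = 1 := SimpleGraph.dist_eq_one_iff_adj.mpr h
  have h2 : 0 < (multipartite p).dist u w :=
    Reachable.pos_dist_of_ne (mp_reachable hk hsize u w) (Ne.symm hwu)
  have h3 : 0 < (multipartite p).dist w v :=
    Reachable.pos_dist_of_ne (mp_reachable hk hsize w v) hwv
  intro hmem
  simp only [gpInterval, Set.mem_setOf_eq, h1] at hmem
  omega

/-- Any "rainbow" set (at most one vertex per class) is a general position set. -/
lemma mp_rainbow_gp (hk : 2 ≤ k) (hsize : ∀ i : Fin k, 2 ≤ Set.ncard {v | p v = i})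
    {S : Set V} (hS : ∀ a ∈ S, ∀ b ∈ S, a ≠ b → p a ≠ p b) :
    IsGPSet (multipartite p) S := by
  intro u hu v hv w hw huv huw hvw
  exact mp_not_mem_interval_adj hk hsize (hS u hu v hv huv) (Ne.symm huw) (Ne.symm hvw)

/-- A partition class is a general position set. -/
lemma mp_class_gp (hk : 2 ≤ k) (hsize : ∀ i : Fin k, 2 ≤ Set.ncard {v | p v = i})
    (i : Fin k) : IsGPSet (multipartite p) {v | p v = i} := by
  intro u hu v hv w hw huv huw hvw hmem
  simp only [Set.mem_setOf_eq] at hu hv hw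
  have hdist : (multipartite p).dist u v = 2 := by
    obtain ⟨x, hx⟩ := mp_exists_other hk hsize i
    exact mp_dist_eq_two huv (hu.trans hv.symm) x (by rw [hu]; exact hx)
  have h2 : (multipartite p).dist u w ≠ 1 := fun h1 =>
    (SimpleGraph.dist_eq_one_iff_adj.mp h1) (hu.trans hw.symm)
  have h2' : 0 < (multipartite p).dist u w :=
    Reachable.pos_dist_of_ne (mp_reachable hk hsize u w) huw
  have h3 : 0 < (multipartite p).dist w v :=
    Reachable.pos_dist_of_ne (mp_reachable hk hsize w v) (Ne.symm hvw)
  simp only [gpInterval, Set.mem_setOf_eq, hdist] at hmem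
  omega

end aux

theorem stmt_18 {V : Type*} [Fintype V] (k : ℕ) (hk : 2 ≤ k) (p : V → Fin k)
    (hsize : ∀ i : Fin k, 2 ≤ Set.ncard {v | p v = i}) (S : Set V) :
    (IsGPSet (multipartite p) S ∧
      ∀ T, IsGPSet (multipartite p) T → S ⊆ T → S = T) ↔
    ((∃ i : Fin k, S = {v | p v = i}) ∨ (∀ i : Fin k, ∃! v, v ∈ S ∧ p v = i)) := by
  constructor
  · rintro ⟨hGP, hmax⟩
    by_cases hmono : ∃ u ∈ S, ∃ v ∈ S, u ≠ v ∧ p u = p v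
    · obtain ⟨u, hu, v, hv, huv, hpuv⟩ := hmono
      left
      refine ⟨p u, hmax _ (mp_class_gp hk hsize (p u)) ?_⟩
      intro x hx
      by_contra hne
      simp only [Set.mem_setOf_eq] at hne
      have hxu : x ≠ u := fun e => hne (e ▸ rfl)
      have hxv : x ≠ v := fun e => hne (e ▸ hpuv.symm)
      exact hGP u hu v hv x hx huv (Ne.symm hxu) (Ne.symm hxv)
        (mp_mem_interval huv hpuv x hne)
    · push_neg at hmono
      right
      intro i
      have hex : ∃ v ∈ S, p v = i := by
        by_contra hno
        push_neg at hno
        have h2 := hsize i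
        have : ({v | p v = i} : Set V).Nonempty := Set.nonempty_of_ncard_ne_zero (by omega)
        obtain ⟨v, hv⟩ := this
        have hvS : v ∉ S := fun hvS => hno v hvS hv
        have hT : IsGPSet (multipartite p) (insert v S) := by
          apply mp_rainbow_gp hk hsize
          rintro a (rfl | ha) b (rfl | hb) hab
          · exact absurd rfl hab
          · rw [hv]; exact fun e => hno b hb e.symm
          · rw [hv]; exact fun e => hno a ha e
          · exact hmono a ha b hb hab
        have := hmax _ hT (Set.subset_insert v S)
        exact hvS (this ▸ Set.mem_insert v S)
      obtain ⟨v, hvS, hvp⟩ := hex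
      refine ⟨v, ⟨hvS, hvp⟩, ?_⟩
      rintro w ⟨hwS, hwp⟩
      by_contra hne
      exact hmono w hwS v hvS hne (hwp.trans hvp.symm)
  · rintro (⟨i, rfl⟩ | htrans)
    · refine ⟨mp_class_gp hk hsize i, fun T hT hsub => hsub.antisymm ?_⟩
      intro t ht
      by_contra hne
      simp only [Set.mem_setOf_eq] at hne
      obtain ⟨u, hu, v, hv, huv⟩ := (Set.one_lt_ncard (Set.toFinite _)).mp (hsize i)
      have htu : t ≠ u := fun e => hne (e ▸ hu)
      have htv : t ≠ v := fun e => hne (e ▸ hv)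
      exact hT u (hsub hu) v (hsub hv) t ht huv (Ne.symm htu) (Ne.symm htv)
        (mp_mem_interval huv (hu.trans hv.symm) t (by rw [hu]; exact hne))
    · have hrb : ∀ a ∈ S, ∀ b ∈ S, a ≠ b → p a ≠ p b := by
        intro a ha b hb hab he
        obtain ⟨x, _, hx⟩ := htrans (p a)
        exact hab ((hx a ⟨ha, rfl⟩).trans (hx b ⟨hb, he.symm⟩).symm)
      refine ⟨mp_rainbow_gp hk hsize hrb, fun T hT hsub => hsub.antisymm ?_⟩
      intro t ht
      by_contra htS
      obtain ⟨v, ⟨hvS, hvp⟩, _⟩ := htrans (p t)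
      have htv : t ≠ v := fun e => htS (e ▸ hvS)
      have : Nontrivial (Fin k) := Fin.nontrivial_iff_two_le.mpr hk
      obtain ⟨j, hj⟩ := exists_ne (p t)
      obtain ⟨w, ⟨hwS, hwp⟩, _⟩ := htrans j
      have hwt : p w ≠ p t := by rw [hwp]; exact hj
      have hwv : w ≠ v := fun e => hwt (e ▸ hvp.symm ▸ rfl)
      exact hT t ht v (hsub hvS) w (hsub hwS) htv (fun e => hwt (e ▸ rfl)) (Ne.symm hwv)
        (mp_mem_interval htv hvp.symm w hwt)
end
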